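/- For all integers r ≥ 1 and s ≥ 0 and every ε > 0 there exists a constant c = c(r, s, ε) > 0 such that the following holds. Let z_1, …, z_r ∈ ℝ satisfy |z_i − z_j| ≥ ε for all i ≠ j, let α_{i,j} ∈ ℂ for i ∈ {1,…,r} and j ∈ {0,…,s}, and set F(θ) = ∑_{i=1}^r ∑_{j=0}^s α_{i,j} θ^j e^{i z_i θ}. Then ∫_0^1 |F(θ)|² dθ ≥ c · ∑_{i=1}^r ∑_{j=0}^s |α_{i,j}|². -/

import Mathlib

/-!
We induct on the number of frequencies. If they split into two groups at distance at least `M`,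
integration by parts shows that the cross term of `∫₀¹ |F|²` between the groups is
`O(1 / M) · ∑ |α i j|²`, so the bounds for the two smaller groups combine once `M` is large.
Otherwise all frequencies lie in an interval of length `r M`; translating them multiplies `F` by a
unimodular factor, so they may be taken in a fixed compact set. There `∫₀¹ |F|²` is continuous in
`(z, α)` and positive for `α` on the unit sphere, because the functions `θ ^ j e^{i z θ}` are
linearly independent (apply powers of `d/dθ - i z_k`); compactness and homogeneity in `α` give
the bound.
-/

open MeasureTheory Real
open Polynomial Complex Set Filter Topology ComplexConjugate

namespace Polynomial

variable {R : Type*} [CommRing R]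

noncomputable def twistedDerivative (c : R) (q : R[X]) : R[X] :=
  derivative q + C c * q

lemma twistedDerivative_zero_left : twistedDerivative (0 : R) = derivative := by
  funext q; simp [twistedDerivative]

lemma twistedDerivative_injective [NoZeroDivisors R] {c : R} (hc : c ≠ 0) :
    Function.Injective (twistedDerivative c) := by
  intro p q h
  by_contra hpq
  have hsub : twistedDerivative c (p - q) = 0 := by
    simp only [twistedDerivative, derivative_sub, mul_sub] at h ⊢
    rw [sub_add_sub_comm, ← h, sub_self]
  have hcoeff : (twistedDerivative c (p - q)).coeff (p - q).natDegree
      = c * (p - q).leadingCoeff := by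
    rw [twistedDerivative, coeff_add, coeff_C_mul, coeff_derivative,
      coeff_natDegree_succ_eq_zero, zero_mul, zero_add, leadingCoeff]
  rw [hsub, coeff_zero, eq_comm] at hcoeff
  exact mul_ne_zero hc (leadingCoeff_ne_zero.2 (sub_ne_zero.2 hpq)) hcoeff

end Polynomial

lemma norm_exp_I_mul_ofReal_mul (w θ : ℝ) : ‖exp (I * w * θ)‖ = 1 := by
  simp [Complex.norm_exp]

lemma norm_integral_pow_mul_exp_le (m : ℕ) {w : ℝ} (hw : w ≠ 0) :
    ‖∫ θ in (0 : ℝ)..1, (θ : ℂ) ^ m * exp (I * w * θ)‖ ≤ (m + 2) / |w| := by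
  have hIw : I * w ≠ 0 := mul_ne_zero I_ne_zero (ofReal_ne_zero.2 hw)
  set v : ℝ → ℂ := fun θ => exp (I * w * θ) / (I * w)
  have hv_norm (θ : ℝ) : ‖v θ‖ = 1 / |w| := by
    simp [v, norm_exp_I_mul_ofReal_mul]
  have hu (θ : ℝ) : HasDerivAt (fun θ : ℝ => (θ : ℂ) ^ m) (m * (θ : ℂ) ^ (m - 1)) θ :=
    (hasDerivAt_pow m (θ : ℂ)).comp_ofReal
  have hv (θ : ℝ) : HasDerivAt v (exp (I * w * θ)) θ := by
    have := (((hasDerivAt_id (θ : ℂ)).const_mul (I * w)).cexp.div_const (I * w)).comp_ofReal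
    simpa [hIw, mul_div_assoc] using this
  rw [intervalIntegral.integral_mul_deriv_eq_deriv_mul (fun θ _ => hu θ) (fun θ _ => hv θ)
    (by apply Continuous.intervalIntegrable; fun_prop)
    (by apply Continuous.intervalIntegrable; fun_prop)]
  have hboundary (θ : ℝ) (hθ : |θ| ≤ 1) : ‖(θ : ℂ) ^ m * v θ‖ ≤ 1 / |w| := by
    rw [norm_mul, hv_norm, norm_pow, norm_real, norm_eq_abs]
    exact mul_le_of_le_one_left (by positivity) (pow_le_one₀ (abs_nonneg θ) hθ)
  have hint : ‖∫ θ in (0 : ℝ)..1, (m * (θ : ℂ) ^ (m - 1)) * v θ‖ ≤ m / |w| := by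
    refine (intervalIntegral.norm_integral_le_of_norm_le_const (C := m / |w|)
      fun θ hθ => ?_).trans_eq (by norm_num)
    rw [uIoc_of_le zero_le_one] at hθ
    rw [norm_mul, norm_mul, hv_norm, norm_pow, norm_real, norm_eq_abs, Complex.norm_natCast,
      abs_of_pos hθ.1, mul_one_div]
    gcongr
    exact mul_le_of_le_one_right (Nat.cast_nonneg m) (pow_le_one₀ hθ.1.le hθ.2)
  calc _ ≤ ‖(1 : ℂ) ^ m * v 1‖ + ‖(0 : ℂ) ^ m * v 0‖ + m / |w| :=
        (norm_sub_le _ _).trans (add_le_add (norm_sub_le _ _) hint)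
    _ ≤ 1 / |w| + 1 / |w| + m / |w| := by
        gcongr
        · simpa using hboundary 1 (by norm_num)
        · simpa using hboundary 0 (by norm_num)
    _ = (m + 2) / |w| := by ring

lemma integral_sum_mul_conj_sum {X Y : Type*} {a b : ℝ} (S : Finset X) (T : Finset Y)
    {f : X → ℝ → ℂ} {g : Y → ℝ → ℂ} (hf : ∀ x, Continuous (f x))
    (hg : ∀ y, Continuous (g y)) :
    ∫ θ in a..b, (∑ x ∈ S, f x θ) * conj (∑ y ∈ T, g y θ) =
      ∑ x ∈ S, ∑ y ∈ T, ∫ θ in a..b, f x θ * conj (g y θ) := by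
  simp_rw [map_sum, Finset.sum_mul_sum]
  rw [intervalIntegral.integral_finsetSum]
  · exact Finset.sum_congr rfl fun x _ => intervalIntegral.integral_finsetSum fun y _ =>
      Continuous.intervalIntegrable (by fun_prop) _ _
  · exact fun x _ => Continuous.intervalIntegrable (by fun_prop) _ _

lemma exists_gap_or_bounded {ι : Type*} [DecidableEq ι] (A : Finset ι) (z : ι → ℝ) {M : ℝ}
    (hM : 0 < M) :
    (∃ B ⊂ A, B.Nonempty ∧ ∀ i ∈ B, ∀ k ∈ A \ B, M ≤ |z i - z k|) ∨
      ∃ t, ∀ i ∈ A, |z i - t| ≤ A.card * M := by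
  rcases A.eq_empty_or_nonempty with rfl | hA
  · exact Or.inr ⟨0, by simp⟩
  -- Sort the points into the buckets `[n M, (n + 1) M)`. An empty bucket between the extreme
  -- ones gives the gap; otherwise the occupied buckets are at most `#A` consecutive ones.
  set n : ι → ℤ := fun i => ⌊z i / M⌋
  have hn (i : ι) : n i * M ≤ z i ∧ z i < (n i + 1) * M :=
    ⟨(le_div_iff₀ hM).1 (Int.floor_le _), (div_lt_iff₀ hM).1 (Int.lt_floor_add_one _)⟩
  set S := A.image n
  have hS : S.Nonempty := hA.image n
  by_cases hfull : Finset.Icc (S.min' hS) (S.max' hS) ⊆ S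
  · right
    have hcard : S.max' hS + 1 - S.min' hS ≤ A.card := by
      have := (Finset.card_le_card hfull).trans Finset.card_image_le
      rw [Int.card_Icc] at this
      omega
    refine ⟨S.min' hS * M, fun i hi => ?_⟩
    have hlo : ((S.min' hS : ℤ) : ℝ) ≤ n i := by
      exact_mod_cast S.min'_le _ (Finset.mem_image_of_mem n hi)
    have hhi : (n i : ℝ) + 1 ≤ S.min' hS + A.card := by
      have := S.le_max' _ (Finset.mem_image_of_mem n hi)
      exact_mod_cast (by omega : n i + 1 ≤ S.min' hS + A.card)
    have := hn i
    rw [abs_le]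
    constructor <;> nlinarith
  · left
    obtain ⟨k, hk, hkS⟩ := Finset.not_subset.1 hfull
    rw [Finset.mem_Icc] at hk
    obtain ⟨i₀, hi₀, hi₀n⟩ := Finset.mem_image.1 (S.min'_mem hS)
    obtain ⟨i₁, hi₁, hi₁n⟩ := Finset.mem_image.1 (S.max'_mem hS)
    have hne {i : ι} (hi : i ∈ A) : n i ≠ k :=
      fun h => hkS (h ▸ Finset.mem_image_of_mem n hi)
    refine ⟨A.filter fun i => n i < k, Finset.filter_ssubset.2 ⟨i₁, hi₁, by omega⟩,
      ⟨i₀, Finset.mem_filter.2 ⟨hi₀, lt_of_le_of_ne (hi₀n ▸ hk.1) (hne hi₀)⟩⟩,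
      fun i hi j hj => ?_⟩
    rw [Finset.mem_filter] at hi
    obtain ⟨hjA, hjk⟩ := Finset.mem_sdiff.1 hj
    rw [Finset.mem_filter, not_and, not_lt] at hjk
    have hi' : (n i : ℝ) + 1 ≤ k := by exact_mod_cast hi.2
    have hj' : (k : ℝ) + 1 ≤ n j := by exact_mod_cast lt_of_le_of_ne (hjk hjA) (hne hjA).symm
    have := hn i
    have := hn j
    rw [abs_sub_comm]
    exact (le_abs_self _).trans' (by nlinarith)

lemma exists_pos_forall_mem_of_antitone {X : Type*} {S : Finset X} {P : X → ℝ → Prop}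
    (hP : ∀ x c c', c' ≤ c → P x c → P x c') (h : ∀ x ∈ S, ∃ c > 0, P x c) :
    ∃ c > 0, ∀ x ∈ S, P x c := by
  have : ∀ᶠ c in 𝓝[>] (0 : ℝ), ∀ x ∈ S, P x c := by
    rw [Filter.eventually_all_finset]
    intro x hx
    obtain ⟨c, hc, hPc⟩ := h x hx
    filter_upwards [Ioo_mem_nhdsGT hc] with c' hc' using hP x c c' hc'.2.le hPc
  obtain ⟨c, hPc, hc⟩ := (this.and self_mem_nhdsWithin).exists
  exact ⟨c, hc, hPc⟩

namespace ExpPoly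

variable {ι : Type*} {A : Finset ι}

noncomputable def polyExpSum (A : Finset ι) (w : ι → ℂ) (p : ι → ℂ[X]) (θ : ℝ) : ℂ :=
  ∑ i ∈ A, (p i).eval (θ : ℂ) * exp (w i * θ)

variable {w : ι → ℂ} {p : ι → ℂ[X]}

lemma hasDerivAt_eval_mul_exp (q : ℂ[X]) (c : ℂ) (θ : ℝ) :
    HasDerivAt (fun θ : ℝ => q.eval (θ : ℂ) * exp (c * θ))
      ((twistedDerivative c q).eval (θ : ℂ) * exp (c * θ)) θ := by
  have hq := (q.hasDerivAt (θ : ℂ)).comp_ofReal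
  have he := (((hasDerivAt_id (θ : ℂ)).const_mul c).cexp).comp_ofReal
  refine (hq.fun_mul he).congr_deriv ?_
  simp only [twistedDerivative, eval_add, eval_mul, eval_C, id]
  ring

lemma hasDerivAt_polyExpSum (θ : ℝ) :
    HasDerivAt (polyExpSum A w p)
      (polyExpSum A w (fun i => twistedDerivative (w i) (p i)) θ) θ :=
  HasDerivAt.fun_sum fun i _ => hasDerivAt_eval_mul_exp (p i) (w i) θ

lemma polyExpSum_sub_const (μ : ℂ) (θ : ℝ) :
    polyExpSum A (fun i => w i - μ) p θ = exp (-μ * θ) * polyExpSum A w p θ := by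
  rw [polyExpSum, polyExpSum, Finset.mul_sum]
  refine Finset.sum_congr rfl fun i _ => ?_
  rw [mul_left_comm, ← Complex.exp_add]
  ring_nf

lemma eqOn_zero_iterate_twistedDerivative {U : Set ℝ} (hU : IsOpen U)
    (h : EqOn (polyExpSum A w p) 0 U) (n : ℕ) :
    EqOn (polyExpSum A w fun i => (twistedDerivative (w i))^[n] (p i)) 0 U := by
  induction n with
  | zero => exact h
  | succ n ih =>
    intro θ hθ
    simp only [Function.iterate_succ_apply']
    rw [← (hasDerivAt_polyExpSum θ).deriv,
      (Filter.eventuallyEq_of_mem (hU.mem_nhds hθ) ih).deriv_eq]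
    simp

lemma eq_zero_of_polyExpSum_eqOn_zero [DecidableEq ι] (hw : InjOn w A) {U : Set ℝ}
    (hU : IsOpen U) (hUne : U.Nonempty) (h : EqOn (polyExpSum A w p) 0 U) :
    ∀ i ∈ A, p i = 0 := by
  induction A using Finset.induction_on generalizing w p with
  | empty => simp
  | insert a A ha ih =>
    -- After shifting all frequencies by `w a`, the `N`-th iterate of the twisted derivative
    -- kills the `a`-th term and is injective on the others.
    set N := (p a).natDegree + 1
    set q := fun i => (twistedDerivative (w i - w a))^[N] (p i)
    have hq : EqOn (polyExpSum (insert a A) (fun i => w i - w a) q) 0 U :=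
      eqOn_zero_iterate_twistedDerivative hU
        (fun θ hθ => by simp [polyExpSum_sub_const, h hθ]) N
    have hqa : q a = 0 := by
      simp only [q, sub_self, twistedDerivative_zero_left]
      exact iterate_derivative_eq_zero (Nat.lt_succ_self _)
    have hqA : ∀ i ∈ A, q i = 0 :=
      ih (w := fun i => w i - w a)
        (fun i hi k hk hik => hw (Finset.mem_insert_of_mem hi) (Finset.mem_insert_of_mem hk)
          (sub_left_injective hik))
        (fun θ hθ => by simpa [polyExpSum, Finset.sum_insert ha, hqa] using hq hθ)
    have hpA : ∀ i ∈ A, p i = 0 := fun i hi =>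
      have hne : w i - w a ≠ 0 := sub_ne_zero.2 fun hia =>
        ha (hw (Finset.mem_insert_of_mem hi) (Finset.mem_insert_self a A) hia ▸ hi)
      (twistedDerivative_injective hne).iterate N <| (hqA i hi).trans
        (Function.iterate_fixed (by simp [twistedDerivative]) N).symm
    have hpa : p a = 0 := by
      obtain ⟨θ₀, hθ₀⟩ := hUne
      refine eq_zero_of_infinite_isRoot _
        (((infinite_of_mem_nhds θ₀ (hU.mem_nhds hθ₀)).image ofReal_injective.injOn).mono ?_)
      rintro _ ⟨θ, hθ, rfl⟩
      have := h hθ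
      rw [polyExpSum, Finset.sum_insert ha, Finset.sum_eq_zero fun i hi => by
        simp [hpA i hi]] at this
      simpa using this
    intro i hi
    rcases Finset.mem_insert.1 hi with rfl | hi
    exacts [hpa, hpA i hi]

variable {s : ℕ}

noncomputable def expPoly (A : Finset ι) (z : ι → ℝ) (α : ι → Fin (s + 1) → ℂ) (θ : ℝ) :
    ℂ :=
  ∑ i ∈ A, ∑ j : Fin (s + 1), α i j * (θ : ℂ) ^ (j : ℕ) * exp (I * z i * θ)

noncomputable def energy (A : Finset ι) (z : ι → ℝ) (α : ι → Fin (s + 1) → ℂ) : ℝ :=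
  ∫ θ in (0 : ℝ)..1, ‖expPoly A z α θ‖ ^ 2

noncomputable def coeffNormSq (A : Finset ι) (α : ι → Fin (s + 1) → ℂ) : ℝ :=
  ∑ i ∈ A, ∑ j : Fin (s + 1), ‖α i j‖ ^ 2

variable {z : ι → ℝ} {α : ι → Fin (s + 1) → ℂ}

@[fun_prop]
lemma continuous_expPoly : Continuous (expPoly A z α) := by
  unfold expPoly; fun_prop

lemma coeffNormSq_nonneg : 0 ≤ coeffNormSq A α := by
  unfold coeffNormSq; positivity

lemma energy_nonneg : 0 ≤ energy A z α :=
  intervalIntegral.integral_nonneg zero_le_one fun _ _ => sq_nonneg _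

open scoped Classical in
lemma expPoly_eq_polyExpSum (θ : ℝ) :
    expPoly A z α θ = polyExpSum A (fun i => I * z i) (fun i => ofFn (s + 1) (α i)) θ := by
  simp only [expPoly, polyExpSum, ofFn_eq_sum_monomial, eval_finsetSum, eval_monomial,
    Finset.sum_mul]

lemma eqOn_zero_of_energy_eq_zero (h : energy A z α = 0) :
    EqOn (expPoly A z α) 0 (Ioo 0 1) := by
  have hcont : Continuous fun θ => ‖expPoly A z α θ‖ ^ 2 := by fun_prop
  rw [energy, intervalIntegral.integral_eq_zero_iff_of_le_of_nonneg_ae zero_le_one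
    (ae_of_all _ fun _ => sq_nonneg _) (hcont.intervalIntegrable _ _)] at h
  intro θ hθ
  simpa using Measure.eqOn_Ioc_of_ae_eq volume h hcont.continuousOn continuousOn_const
    (Ioo_subset_Ioc_self hθ)

lemma energy_pos (hz : InjOn z A) (hα : ∃ i ∈ A, α i ≠ 0) : 0 < energy A z α := by
  classical
  refine energy_nonneg.lt_of_ne fun h => ?_
  obtain ⟨i, hi, hαi⟩ := hα
  have hw : InjOn (fun i => I * z i) A := fun i hi k hk h =>
    hz hi hk (by simpa [I_ne_zero] using h)
  have := eq_zero_of_polyExpSum_eqOn_zero hw isOpen_Ioo (nonempty_Ioo.2 zero_lt_one)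
    (fun θ hθ => by rw [← expPoly_eq_polyExpSum]; exact eqOn_zero_of_energy_eq_zero h.symm hθ)
    i hi
  exact hαi (injective_ofFn _ (this.trans (ofFn_zero _).symm))

def Separated (e : ℝ) (A : Finset ι) (z : ι → ℝ) : Prop :=
  ∀ i ∈ A, ∀ k ∈ A, i ≠ k → e ≤ |z i - z k|

lemma Separated.injOn {e : ℝ} (he : 0 < e) (h : Separated e A z) : InjOn z A := by
  intro i hi k hk hik
  by_contra hne
  have := h i hi k hk hne
  rw [hik, sub_self, abs_zero] at this
  exact this.not_gt he

lemma Separated.mono {e : ℝ} {B : Finset ι} (h : Separated e A z) (hBA : B ⊆ A) :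
    Separated e B z :=
  fun i hi k hk => h i (hBA hi) k (hBA hk)

lemma isClosed_setOf_separated (e : ℝ) (A : Finset ι) :
    IsClosed {z : ι → ℝ | Separated e A z} := by
  simp only [Separated, ofPred_forall]
  exact isClosed_iInter fun i => isClosed_iInter fun _ => isClosed_iInter fun k =>
    isClosed_iInter fun _ => isClosed_iInter fun _ => isClosed_le continuous_const (by fun_prop)

lemma continuous_energy :
    Continuous fun x : (ι → ℝ) × (ι → Fin (s + 1) → ℂ) => energy A x.1 x.2 := by
  refine intervalIntegral.continuous_parametric_intervalIntegral_of_continuous' ?_ 0 1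
  unfold expPoly
  fun_prop

lemma energy_smul (c : ℂ) : energy A z (c • α) = ‖c‖ ^ 2 * energy A z α := by
  rw [energy, energy, ← intervalIntegral.integral_const_mul]
  congr 1 with θ
  rw [← mul_pow, ← norm_mul, expPoly, expPoly, Finset.mul_sum]
  simp only [Pi.smul_apply, smul_eq_mul, Finset.mul_sum, mul_assoc]

lemma energy_sub_const (t : ℝ) : energy A (fun i => z i - t) α = energy A z α := by
  refine intervalIntegral.integral_congr fun θ _ => ?_
  have : expPoly A (fun i => z i - t) α θ = exp (-(I * t * θ)) * expPoly A z α θ := by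
    simp only [expPoly, Finset.mul_sum]
    refine Finset.sum_congr rfl fun i _ => Finset.sum_congr rfl fun j _ => ?_
    rw [mul_left_comm, ← Complex.exp_add]
    push_cast
    ring_nf
  simp [this, Complex.norm_exp]

lemma coeffNormSq_le [Fintype ι] (α : ι → Fin (s + 1) → ℂ) :
    coeffNormSq Finset.univ α ≤ (Fintype.card ι * (s + 1)) * ‖α‖ ^ 2 := by
  calc coeffNormSq Finset.univ α ≤ ∑ _i : ι, ∑ _j : Fin (s + 1), ‖α‖ ^ 2 := by
        unfold coeffNormSq
        gcongr with i _ j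
        exact (norm_le_pi_norm (α i) j).trans (norm_le_pi_norm α i)
    _ = _ := by simp [mul_assoc]

lemma exists_pos_energy_lowerBound_of_abs_le [Fintype ι] {e : ℝ} (he : 0 < e) (D : ℝ) :
    ∃ c > 0, ∀ z : ι → ℝ, Separated e Finset.univ z → (∀ i, |z i| ≤ D) →
      ∀ α : ι → Fin (s + 1) → ℂ, c * coeffNormSq Finset.univ α ≤ energy Finset.univ z α := by
  set Z := {z : ι → ℝ | Separated e Finset.univ z} ∩ univ.pi fun _ => Icc (-D) D
  have hK : IsCompact (Z ×ˢ Metric.sphere (0 : ι → Fin (s + 1) → ℂ) 1) :=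
    ((isCompact_univ_pi fun _ => isCompact_Icc).inter_left
      (isClosed_setOf_separated e _)).prod (isCompact_sphere 0 1)
  obtain ⟨c, hc, hcK⟩ := hK.exists_forall_le' continuous_energy.continuousOn fun x hx =>
    energy_pos (hx.1.1.injOn he) (by
      simpa [Function.ne_iff] using Metric.ne_of_mem_sphere hx.2 one_ne_zero)
  set N : ℝ := Fintype.card ι * (s + 1)
  refine ⟨c / (N + 1), by positivity, fun z hsep hD α => ?_⟩
  have hz : z ∈ Z := ⟨hsep, fun i _ => abs_le.1 (hD i)⟩
  rcases eq_or_ne α 0 with rfl | hα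
  · simp [coeffNormSq, energy_nonneg]
  have hnorm : c * ‖α‖ ^ 2 ≤ energy Finset.univ z α := by
    have := hcK (z, (‖α‖⁻¹ : ℂ) • α) ⟨hz, by
      rw [mem_sphere_zero_iff_norm]; exact norm_smul_inv_norm hα⟩
    rw [energy_smul, norm_inv, Complex.norm_real, norm_norm, inv_pow,
      le_inv_mul_iff₀ (by positivity)] at this
    simpa only [mul_comm] using this
  calc c / (N + 1) * coeffNormSq Finset.univ α ≤ c / (N + 1) * (N * ‖α‖ ^ 2) :=
        mul_le_mul_of_nonneg_left (coeffNormSq_le α) (by positivity)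
    _ ≤ c * ‖α‖ ^ 2 := by
        rw [div_mul_eq_mul_div, div_le_iff₀ (by positivity)]
        nlinarith [sq_nonneg ‖α‖]
    _ ≤ _ := hnorm

lemma coeffNormSq_subtype (A : Finset ι) (α : ι → Fin (s + 1) → ℂ) :
    coeffNormSq (Finset.univ : Finset A) (fun i => α i) = coeffNormSq A α :=
  Finset.sum_coe_sort A fun i => ∑ j, ‖α i j‖ ^ 2

lemma expPoly_subtype (A : Finset ι) (z : ι → ℝ) (α : ι → Fin (s + 1) → ℂ) (θ : ℝ) :
    expPoly (Finset.univ : Finset A) (fun i => z i) (fun i => α i) θ = expPoly A z α θ :=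
  Finset.sum_coe_sort A fun i => ∑ j, α i j * (θ : ℂ) ^ (j : ℕ) * exp (I * z i * θ)

lemma energy_subtype (A : Finset ι) (z : ι → ℝ) (α : ι → Fin (s + 1) → ℂ) :
    energy (Finset.univ : Finset A) (fun i => z i) (fun i => α i) = energy A z α := by
  simp only [energy, expPoly_subtype]

lemma exists_pos_energy_lowerBound_of_abs_sub_le {e : ℝ} (he : 0 < e) (A : Finset ι)
    (D : ℝ) :
    ∃ c > 0, ∀ z : ι → ℝ, Separated e A z → ∀ t : ℝ, (∀ i ∈ A, |z i - t| ≤ D) →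
      ∀ α : ι → Fin (s + 1) → ℂ, c * coeffNormSq A α ≤ energy A z α := by
  obtain ⟨c, hc, h⟩ := exists_pos_energy_lowerBound_of_abs_le (ι := A) (s := s) he D
  refine ⟨c, hc, fun z hz t ht α => ?_⟩
  have := h (fun i => z i - t)
    (fun i _ k _ hik => by simpa using hz i i.2 k k.2 (Subtype.coe_ne_coe.2 hik))
    (fun i => ht i i.2) (fun i => α i)
  rwa [coeffNormSq_subtype, energy_subtype A (fun i => z i - t), energy_sub_const] at this

noncomputable def expMonomial (a : ℂ) (n : ℕ) (x θ : ℝ) : ℂ :=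
  a * (θ : ℂ) ^ n * exp (I * x * θ)

lemma norm_integral_expMonomial_mul_conj_le (a b : ℂ) (n m : ℕ) {x y : ℝ} (hxy : x ≠ y) :
    ‖∫ θ in (0 : ℝ)..1, expMonomial a n x θ * conj (expMonomial b m y θ)‖ ≤
      ‖a‖ * ‖b‖ * ((n + m + 2) / |x - y|) := by
  have (θ : ℝ) : expMonomial a n x θ * conj (expMonomial b m y θ) =
      a * conj b * ((θ : ℂ) ^ (n + m) * exp (I * ↑(x - y) * θ)) := by
    simp only [expMonomial, map_mul, map_pow, conj_ofReal, ← exp_conj, conj_I]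
    rw [pow_add, ofReal_sub, mul_sub, sub_mul, sub_eq_add_neg, Complex.exp_add]
    ring_nf
  simp_rw [this, intervalIntegral.integral_const_mul, norm_mul, RCLike.norm_conj]
  gcongr
  exact_mod_cast norm_integral_pow_mul_exp_le (n + m) (sub_ne_zero.2 hxy)

lemma expPoly_eq_sum_product (A : Finset ι) (z : ι → ℝ) (α : ι → Fin (s + 1) → ℂ)
    (θ : ℝ) :
    expPoly A z α θ = ∑ x ∈ A ×ˢ Finset.univ, expMonomial (α x.1 x.2) x.2 (z x.1) θ := by
  rw [Finset.sum_product]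
  rfl

lemma norm_integral_expPoly_mul_conj_le {B C : Finset ι} {M : ℝ} (hM : 0 < M)
    (hgap : ∀ i ∈ B, ∀ k ∈ C, M ≤ |z i - z k|) :
    ‖∫ θ in (0 : ℝ)..1, expPoly B z α θ * conj (expPoly C z α θ)‖ ≤
      (2 * s + 2) / M * ((∑ x ∈ B ×ˢ Finset.univ, ‖α x.1 x.2‖) *
        ∑ y ∈ C ×ˢ Finset.univ, ‖α y.1 y.2‖) := by
  simp_rw [expPoly_eq_sum_product]
  rw [integral_sum_mul_conj_sum _ _ (fun _ => by unfold expMonomial; fun_prop)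
    (fun _ => by unfold expMonomial; fun_prop), Finset.sum_mul_sum, Finset.mul_sum]
  refine (norm_sum_le _ _).trans (Finset.sum_le_sum fun x hx => ?_)
  rw [Finset.mul_sum]
  refine (norm_sum_le _ _).trans (Finset.sum_le_sum fun y hy => ?_)
  have hMxy := hgap x.1 (Finset.mem_product.1 hx).1 y.1 (Finset.mem_product.1 hy).1
  have hxy : z x.1 ≠ z y.1 := fun h => by simp [h] at hMxy; linarith
  refine (norm_integral_expMonomial_mul_conj_le _ _ _ _ hxy).trans ?_
  rw [mul_comm]
  gcongr
  have := x.2.is_le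
  have := y.2.is_le
  exact_mod_cast (by omega : (x.2 : ℕ) + y.2 ≤ 2 * s)

lemma energy_eq_of_subset {B : Finset ι} [DecidableEq ι] (hBA : B ⊆ A) :
    energy A z α = energy B z α + energy (A \ B) z α +
      2 * (∫ θ in (0 : ℝ)..1, expPoly B z α θ * conj (expPoly (A \ B) z α θ)).re := by
  have hsplit (θ : ℝ) : ‖expPoly A z α θ‖ ^ 2 = ‖expPoly B z α θ‖ ^ 2 +
      ‖expPoly (A \ B) z α θ‖ ^ 2 +
        2 * (expPoly B z α θ * conj (expPoly (A \ B) z α θ)).re := by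
    rw [expPoly, ← Finset.sum_sdiff hBA, add_comm]
    simp only [Complex.sq_norm]
    exact normSq_add _ _
  simp only [energy, hsplit]
  rw [intervalIntegral.integral_add, intervalIntegral.integral_add,
    intervalIntegral.integral_const_mul]
  · congr 2
    exact intervalIntegral.intervalIntegral_re
      ((continuous_expPoly.mul (continuous_conj.comp continuous_expPoly)).intervalIntegrable _ _)
  all_goals apply Continuous.intervalIntegrable; fun_prop

lemma sq_sum_norm_le_card_mul_coeffNormSq (A : Finset ι) (α : ι → Fin (s + 1) → ℂ) :
    (∑ x ∈ A ×ˢ Finset.univ, ‖α x.1 x.2‖) ^ 2 ≤ (A.card * (s + 1)) * coeffNormSq A α := by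
  calc _ ≤ (A ×ˢ Finset.univ).card * ∑ x ∈ A ×ˢ Finset.univ, ‖α x.1 x.2‖ ^ 2 :=
        sq_sum_le_card_mul_sum_sq
    _ = _ := by simp [Finset.card_product, Finset.sum_product, coeffNormSq]

lemma energy_sub_le_of_gap {B : Finset ι} [DecidableEq ι] (hBA : B ⊆ A) {M : ℝ}
    (hM : 0 < M) (hgap : ∀ i ∈ B, ∀ k ∈ A \ B, M ≤ |z i - z k|) :
    energy B z α + energy (A \ B) z α - (s + 1) ^ 2 * A.card / M * coeffNormSq A α ≤
      energy A z α := by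
  set SB := ∑ x ∈ B ×ˢ Finset.univ, ‖α x.1 x.2‖
  set SC := ∑ x ∈ (A \ B) ×ˢ Finset.univ, ‖α x.1 x.2‖
  have hsum : SB + SC = ∑ x ∈ A ×ˢ Finset.univ, ‖α x.1 x.2‖ := by
    simp only [SB, SC, Finset.sum_product]
    rw [add_comm, Finset.sum_sdiff hBA]
  have hCS := sq_sum_norm_le_card_mul_coeffNormSq A α
  rw [← hsum] at hCS
  have hcross := (Complex.abs_re_le_norm _).trans
    (norm_integral_expPoly_mul_conj_le (α := α) hM hgap)
  rw [energy_eq_of_subset hBA]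
  have hAMGM : 4 * (SB * SC) ≤ (SB + SC) ^ 2 := by nlinarith [sq_nonneg (SB - SC)]
  have : 2 * ((2 * s + 2) / M * (SB * SC)) ≤ (s + 1) ^ 2 * A.card / M * coeffNormSq A α := by
    calc 2 * ((2 * s + 2) / M * (SB * SC)) = (s + 1) / M * (4 * (SB * SC)) := by ring
      _ ≤ (s + 1) / M * ((A.card * (s + 1)) * coeffNormSq A α) :=
        mul_le_mul_of_nonneg_left (hAMGM.trans hCS) (by positivity)
      _ = _ := by ring
  linarith [(abs_le.1 hcross).1]

def EnergyLowerBound (s : ℕ) (e : ℝ) (A : Finset ι) (c : ℝ) : Prop :=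
  ∀ z : ι → ℝ, Separated e A z →
    ∀ α : ι → Fin (s + 1) → ℂ, c * coeffNormSq A α ≤ energy A z α

lemma EnergyLowerBound.mono {e c c' : ℝ} (h : EnergyLowerBound s e A c) (hc : c' ≤ c) :
    EnergyLowerBound s e A c' :=
  fun z hz α => (mul_le_mul_of_nonneg_right hc coeffNormSq_nonneg).trans (h z hz α)

theorem exists_pos_energyLowerBound {e : ℝ} (he : 0 < e) (A : Finset ι) :
    ∃ c > 0, EnergyLowerBound s e A c := by
  classical
  induction A using Finset.strongInduction with
  | H A ih =>
  obtain ⟨c₀, hc₀, hsub⟩ : ∃ c > 0, ∀ B ∈ A.ssubsets, EnergyLowerBound s e B c :=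
    exists_pos_forall_mem_of_antitone (fun _ _ _ hc h => h.mono hc)
      fun B hB => ih B (Finset.mem_ssubsets.1 hB)
  set K : ℝ := (s + 1) ^ 2 * A.card
  set M := 2 * K / c₀ + 1
  have hM : 0 < M := by positivity
  have hKM : K / M ≤ c₀ / 2 := by
    have : c₀ / 2 * M = K + c₀ / 2 := by simp only [M]; field_simp
    rw [div_le_iff₀ hM, this]
    linarith
  obtain ⟨c₁, hc₁, hbdd⟩ :=
    exists_pos_energy_lowerBound_of_abs_sub_le (s := s) he A (A.card * M)
  refine ⟨min (c₀ / 2) c₁, by positivity, fun z hz α => ?_⟩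
  rcases exists_gap_or_bounded A z hM with ⟨B, hBA, hBne, hgap⟩ | ⟨t, ht⟩
  · have hB := hsub B (Finset.mem_ssubsets.2 hBA) z (hz.mono hBA.subset) α
    have hC := hsub (A \ B) (Finset.mem_ssubsets.2 (Finset.sdiff_ssubset hBA.subset hBne)) z
      (hz.mono Finset.sdiff_subset) α
    have hmass : coeffNormSq B α + coeffNormSq (A \ B) α = coeffNormSq A α := by
      rw [add_comm]; exact Finset.sum_sdiff hBA.subset
    calc min (c₀ / 2) c₁ * coeffNormSq A α ≤ c₀ / 2 * coeffNormSq A α :=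
          mul_le_mul_of_nonneg_right (min_le_left _ _) coeffNormSq_nonneg
      _ = c₀ * coeffNormSq B α + c₀ * coeffNormSq (A \ B) α - c₀ / 2 * coeffNormSq A α := by
          rw [← mul_add, hmass]; ring
      _ ≤ energy B z α + energy (A \ B) z α - K / M * coeffNormSq A α :=
          sub_le_sub (add_le_add hB hC) (mul_le_mul_of_nonneg_right hKM coeffNormSq_nonneg)
      _ ≤ energy A z α := energy_sub_le_of_gap hBA.subset hM hgap
  · exact (mul_le_mul_of_nonneg_right (min_le_right _ _) coeffNormSq_nonneg).trans
      (hbdd z hz t ht α)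

end ExpPoly

theorem statement15 (r s : ℕ) (e : ℝ) (he : 0 < e) :
    ∃ c : ℝ, 0 < c ∧ ∀ z : Fin r → ℝ,
      (∀ i j, i ≠ j → e ≤ |z i - z j|) →
      ∀ α : Fin r → Fin (s + 1) → ℂ,
        c * ∑ i : Fin r, ∑ j : Fin (s + 1), ‖α i j‖ ^ 2 ≤
          ∫ θ in (0:ℝ)..1,
            ‖∑ i : Fin r, ∑ j : Fin (s + 1),
              α i j * (θ : ℂ) ^ (j : ℕ) *
                Complex.exp (Complex.I * (z i : ℂ) * (θ : ℂ))‖ ^ 2 := by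
  obtain ⟨c, hc, h⟩ :=
    ExpPoly.exists_pos_energyLowerBound (s := s) he (Finset.univ : Finset (Fin r))
  exact ⟨c, hc, fun z hz α => h z (fun i _ k _ => hz i k) α⟩
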